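/- arXiv:1001.3836 — 4 statements merged into one kernel-verified Lean document; each statement's English description precedes it below -/
import Mathlib

section
/- (Scott's Lemma) Let V be a finite dimensional vector space over a field F and let G ≤ GL(V) be generated by elements g_1, ..., g_r with g_1 g_2 ⋯ g_r = 1. Then Σ_{i=1}^r dim [g_i, V] ≥ dim V + dim [G, V] − dim C_V(G). -/
/-- Scott's Lemma: if `G ≤ GL(V)` is generated by `g 1, ..., g r` with
`g 1 * ⋯ * g r = 1`, then `Σ dim [g i, V] ≥ dim V + dim [G,V] − dim C_V(G)`. -/
theorem scott_lemma {F V : Type*} [Field F] [AddCommGroup V] [Module F V]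
    [FiniteDimensional F V] (r : ℕ) (g : Fin r → LinearMap.GeneralLinearGroup F V)
    (G : Subgroup (LinearMap.GeneralLinearGroup F V))
    (hgen : G = Subgroup.closure (Set.range g))
    (hprod : (List.ofFn g).prod = 1) :
    (∑ i : Fin r,
        (Module.finrank F (LinearMap.range ((g i : V →ₗ[F] V) - 1)) : ℤ)) ≥
      (Module.finrank F V : ℤ) +
        (Module.finrank F
          (Submodule.span F {w : V | ∃ x ∈ G, ∃ v : V, w = (x : V →ₗ[F] V) v - v}) : ℤ) -
        (Module.finrank F ↥(⨅ x ∈ G, LinearMap.ker ((x : V →ₗ[F] V) - 1)) : ℤ) := by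
  classical
  -- prefix products q n = g 0 * g 1 * ⋯ * g (n-1)
  set q : ℕ → LinearMap.GeneralLinearGroup F V :=
    fun n => ((List.ofFn g).take n).prod with hqdef
  have hq0 : q 0 = 1 := by simp [hqdef]
  have hqr : q r = 1 := by
    rw [hqdef]; simp only
    rw [List.take_of_length_le (by simp), hprod]
  have hqsucc : ∀ (i : Fin r), q ((i : ℕ) + 1) = q i * g i := by
    intro i
    have h : (i : ℕ) < (List.ofFn g).length := by simp [i.isLt]
    rw [hqdef]; simp only
    rw [List.prod_take_succ _ _ h]
    congr 1
    simp [List.getElem_ofFn]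
  -- the two linear maps
  set δ : V →ₗ[F] (∀ i : Fin r, ↥(LinearMap.range ((g i : V →ₗ[F] V) - 1))) :=
    LinearMap.pi (fun i => ((g i : V →ₗ[F] V) - 1).rangeRestrict) with hδdef
  set ε : (∀ i : Fin r, ↥(LinearMap.range ((g i : V →ₗ[F] V) - 1))) →ₗ[F] V :=
    ∑ i : Fin r,
      (((q i : V →ₗ[F] V)) ∘ₗ (LinearMap.range ((g i : V →ₗ[F] V) - 1)).subtype) ∘ₗ
        LinearMap.proj i with hεdef
  have hεapp : ∀ w, ε w = ∑ i : Fin r, (q i : V →ₗ[F] V) (w i : V) := by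
    intro w
    rw [hεdef]
    simp [LinearMap.sum_apply]
  -- range δ ≤ ker ε (telescoping)
  have hδε : LinearMap.range δ ≤ LinearMap.ker ε := by
    rintro _ ⟨v, rfl⟩
    rw [LinearMap.mem_ker, hεapp]
    have hterm : ∀ i : Fin r,
        (q i : V →ₗ[F] V) ((δ v i : V)) =
          (q ((i : ℕ) + 1) : V →ₗ[F] V) v - (q i : V →ₗ[F] V) v := by
      intro i
      have h1 : ((δ v i : V)) = (g i : V →ₗ[F] V) v - v := by
        rw [hδdef]; simp [LinearMap.pi_apply]
      rw [h1, map_sub, hqsucc i, Units.val_mul, Module.End.mul_apply]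
    rw [Finset.sum_congr rfl (fun i _ => hterm i)]
    have := Finset.sum_range_sub (fun n => (q n : V →ₗ[F] V) v) r
    rw [Fin.sum_univ_eq_sum_range (fun n => (q (n + 1) : V →ₗ[F] V) v - (q n : V →ₗ[F] V) v) r,
      this, hqr, hq0]
    simp
  -- ker δ ≤ C_V(G)
  have hkerC : LinearMap.ker δ ≤ ⨅ x ∈ G, LinearMap.ker ((x : V →ₗ[F] V) - 1) := by
    intro v hv
    have hfix : ∀ i : Fin r, (g i : V →ₗ[F] V) v = v := by
      intro i
      have h := congrFun (hv : δ v = 0) i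
      have h2 : ((δ v i : V)) = 0 := by rw [h]; rfl
      have h3 : ((δ v i : V)) = (g i : V →ₗ[F] V) v - v := by
        rw [hδdef]; simp [LinearMap.pi_apply]
      rw [h3] at h2
      linear_combination (norm := module) h2
    simp only [Submodule.mem_iInf]
    intro x hx
    rw [hgen] at hx
    have hfixx : (x : V →ₗ[F] V) v = v := by
      induction hx using Subgroup.closure_induction with
      | mem y hy =>
        obtain ⟨i, rfl⟩ := hy
        exact hfix i
      | one => simp
      | mul a b _ _ ha hb =>
        rw [Units.val_mul, Module.End.mul_apply, hb, ha]
      | inv a _ ha =>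
        have : (↑a⁻¹ : V →ₗ[F] V) ((a : V →ₗ[F] V) v) = v := by
          rw [← Module.End.mul_apply, ← Units.val_mul, inv_mul_cancel]; simp
        rw [ha] at this; exact this
    rw [LinearMap.mem_ker, LinearMap.sub_apply, hfixx, Module.End.one_apply, sub_self]
  -- the subgroup of elements x with [x,V] ⊆ range ε
  set R := LinearMap.range ε with hRdef
  set H : Subgroup (LinearMap.GeneralLinearGroup F V) :=
    { carrier := {x | ∀ v : V, (x : V →ₗ[F] V) v - v ∈ R}
      one_mem' := by intro v; simp
      mul_mem' := by
        intro a b ha hb v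
        have h : ((a * b : LinearMap.GeneralLinearGroup F V) : V →ₗ[F] V) v - v =
            ((a : V →ₗ[F] V) ((b : V →ₗ[F] V) v) - (b : V →ₗ[F] V) v) +
              ((b : V →ₗ[F] V) v - v) := by
          rw [Units.val_mul, Module.End.mul_apply]; abel
        rw [h]
        exact R.add_mem (ha _) (hb _)
      inv_mem' := by
        intro a ha v
        have h := ha ((↑a⁻¹ : V →ₗ[F] V) v)
        have h2 : (a : V →ₗ[F] V) ((↑a⁻¹ : V →ₗ[F] V) v) = v := by
          rw [← Module.End.mul_apply, ← Units.val_mul, mul_inv_cancel]; simp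
        rw [h2] at h
        have := R.neg_mem h
        rw [neg_sub] at this
        exact this } with hHdef
  have hHmem : ∀ x : LinearMap.GeneralLinearGroup F V,
      x ∈ H ↔ ∀ v : V, (x : V →ₗ[F] V) v - v ∈ R := fun x => Iff.rfl
  -- ε on a single slot
  have hεsingle : ∀ (i : Fin r) (x : ↥(LinearMap.range ((g i : V →ₗ[F] V) - 1))),
      ε (Pi.single i x) = (q i : V →ₗ[F] V) (x : V) := by
    intro i x
    rw [hεapp]
    rw [Finset.sum_eq_single i]
    · rw [Pi.single_eq_same]
    · intro j _ hj
      rw [Pi.single_eq_of_ne hj]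
      simp
    · simp
  -- prefix products of elements of H lie in H
  have hqH : ∀ m, m ≤ r → (∀ j : Fin r, (j : ℕ) < m → g j ∈ H) → q m ∈ H := by
    intro m
    induction m with
    | zero => intro _ _; rw [hq0]; exact H.one_mem
    | succ k ihk =>
      intro hk hgj
      have hkr : k < r := by omega
      rw [hqsucc ⟨k, hkr⟩]
      refine H.mul_mem (ihk (by omega) (fun j hj => hgj j (by omega))) (hgj ⟨k, hkr⟩ ?_)
      simp
  -- all generators lie in H
  have hgH : ∀ n, n ≤ r → ∀ j : Fin r, (j : ℕ) < n → g j ∈ H := by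
    intro n
    induction n with
    | zero => intro _ j hj; omega
    | succ m ih =>
      intro hn
      have ihm := ih (by omega)
      have hqmH : q m ∈ H := hqH m (by omega) ihm
      intro j hj
      by_cases hjm : (j : ℕ) < m
      · exact ihm j hjm
      · have hje : (j : ℕ) = m := by omega
        rw [hHmem]
        intro v
        have hw : (g j : V →ₗ[F] V) v - v ∈ LinearMap.range ((g j : V →ₗ[F] V) - 1) :=
          ⟨v, by simp⟩
        have h1 : (q j : V →ₗ[F] V) ((g j : V →ₗ[F] V) v - v) ∈ R := by
          rw [hRdef]
          exact ⟨Pi.single j ⟨_, hw⟩, hεsingle j ⟨_, hw⟩⟩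
        have h2 : (q j : V →ₗ[F] V) ((g j : V →ₗ[F] V) v - v) -
            ((g j : V →ₗ[F] V) v - v) ∈ R := by
          have := hqmH
          rw [← hje] at this
          exact (hHmem _).mp this _
        have := R.sub_mem h1 h2
        simpa using this
  have hallg : ∀ j : Fin r, g j ∈ H := fun j => hgH r le_rfl j j.isLt
  -- hence G ≤ H, so [G,V] ⊆ range ε
  have hGH : G ≤ H := by
    rw [hgen]
    apply (Subgroup.closure_le H).mpr
    rintro _ ⟨j, rfl⟩
    exact hallg j
  have hspanR : Submodule.span F {w : V | ∃ x ∈ G, ∃ v : V, w = (x : V →ₗ[F] V) v - v} ≤ R := by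
    apply Submodule.span_le.mpr
    rintro w ⟨x, hx, v, rfl⟩
    exact (hHmem x).mp (hGH hx) v
  -- dimension counting
  have h1 : Module.finrank F (∀ i : Fin r, ↥(LinearMap.range ((g i : V →ₗ[F] V) - 1)))
      = ∑ i, Module.finrank F ↥(LinearMap.range ((g i : V →ₗ[F] V) - 1)) :=
    Module.finrank_pi_fintype F
  have h2 := LinearMap.finrank_range_add_finrank_ker ε
  have h3 := LinearMap.finrank_range_add_finrank_ker δ
  have h4 : Module.finrank F ↥(LinearMap.range δ) ≤ Module.finrank F ↥(LinearMap.ker ε) :=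
    Submodule.finrank_mono hδε
  have h5 : Module.finrank F
      ↥(Submodule.span F {w : V | ∃ x ∈ G, ∃ v : V, w = (x : V →ₗ[F] V) v - v}) ≤
        Module.finrank F ↥R := Submodule.finrank_mono hspanR
  have h6 : Module.finrank F ↥(LinearMap.ker δ) ≤
      Module.finrank F ↥(⨅ x ∈ G, LinearMap.ker ((x : V →ₗ[F] V) - 1)) :=
    Submodule.finrank_mono hkerC
  rw [hRdef] at h5
  have hsum : (∑ i : Fin r,
      (Module.finrank F (LinearMap.range ((g i : V →ₗ[F] V) - 1)) : ℤ)) =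
      ((∑ i, Module.finrank F ↥(LinearMap.range ((g i : V →ₗ[F] V) - 1)) : ℕ) : ℤ) := by
    push_cast
    rfl
  rw [hsum, ← h1, ← h2]
  have h2' : Module.finrank F (∀ i : Fin r,
      ↥(LinearMap.range ((g i : V →ₗ[F] V) - 1))) =
      Module.finrank F ↥(LinearMap.range ε) + Module.finrank F ↥(LinearMap.ker ε) := h2.symm
  push_cast
  omega
end

section
/- Let V be a finite dimensional vector space over a field F and let G ≤ GL(V) be generated by three elements x, y, z with xyz = 1. Then dim C_V(x) + dim C_V(y) + dim C_V(z) ≤ dim V + dim C_V(G) + dim(V/[G,V]). -/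
/-!
Since `z = (xy)⁻¹`, the group `G` is generated by `x` and `y`, so `C_V(G) = C_V(x) ∩ C_V(y)` and
`[G,V] = [x,V] + [y,V]`. Put `a = x⁻¹`, `b = y` and `T : V × V → V`, `T(p, q) = (a - 1)p + (b - 1)q`.
The image of `T` is `[G,V]`, and its kernel contains `C_V(a) × C_V(b)` as well as the
antidiagonal `{(c, -c) | ac = bc}`, whose first coordinates form `C_V(b⁻¹a) = C_V(z)`.
These two subspaces meet inside the antidiagonal of `C_V(a) ∩ C_V(b)`, and rank–nullity for `T`
gives the inequality.
-/

open LinearMap Module Submodule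

theorem Submodule.finrank_prod_eq {F V W : Type*} [Field F] [AddCommGroup V] [Module F V]
    [AddCommGroup W] [Module F W] [FiniteDimensional F V] [FiniteDimensional F W]
    (p : Submodule F V) (q : Submodule F W) :
    finrank F (p.prod q) = finrank F p + finrank F q := by
  have hinj : Function.Injective (p.subtype.prodMap q.subtype) :=
    p.injective_subtype.prodMap q.injective_subtype
  rw [← finrank_prod, ← LinearMap.finrank_range_of_inj hinj, range_prodMap, range_subtype,
    range_subtype]

namespace LinearMap.GeneralLinearGroup

section Generators

variable {R M : Type*} [Ring R] [AddCommGroup M] [Module R M]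

/-- The subgroup of automorphisms acting trivially on `M ⧸ W`. -/
def fixingQuotient (W : Submodule R M) : Subgroup (GeneralLinearGroup R M) where
  carrier := {u | range ((u : M →ₗ[R] M) - 1) ≤ W}
  one_mem' := by simp
  mul_mem' {g h} hg hh := by
    rintro _ ⟨v, rfl⟩
    have hsplit : ((↑(g * h) : M →ₗ[R] M) - 1) v =
        ((g : M →ₗ[R] M) - 1) ((h : M →ₗ[R] M) v) + ((h : M →ₗ[R] M) - 1) v := by
      simp only [Units.val_mul, sub_apply, Module.End.mul_apply, Module.End.one_apply]
      abel
    rw [hsplit]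
    exact W.add_mem (hg (mem_range_self _ _)) (hh (mem_range_self _ _))
  inv_mem' {g} hg := by
    rintro _ ⟨v, rfl⟩
    have hneg : ((↑g⁻¹ : M →ₗ[R] M) - 1) v = -(((g : M →ₗ[R] M) - 1) ((↑g⁻¹ : M →ₗ[R] M) v)) := by
      have hgg : (g : M →ₗ[R] M) ((↑g⁻¹ : M →ₗ[R] M) v) = v := smul_inv_smul g v
      simp only [sub_apply, Module.End.one_apply, hgg, neg_sub]
    rw [hneg]
    exact W.neg_mem (hg (mem_range_self _ _))

theorem mem_fixingQuotient {W : Submodule R M} {u : GeneralLinearGroup R M} :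
    u ∈ fixingQuotient W ↔ range ((u : M →ₗ[R] M) - 1) ≤ W :=
  Iff.rfl

theorem mem_ker_sub_one_iff {u : GeneralLinearGroup R M} {v : M} :
    v ∈ ker ((u : M →ₗ[R] M) - 1) ↔ u ∈ MulAction.stabilizer (GeneralLinearGroup R M) v := by
  rw [mem_ker, sub_apply, Module.End.one_apply, sub_eq_zero, MulAction.mem_stabilizer_iff]
  rfl

theorem ker_inv_sub_one (u : GeneralLinearGroup R M) :
    ker ((↑u⁻¹ : M →ₗ[R] M) - 1) = ker ((u : M →ₗ[R] M) - 1) := by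
  ext v
  simp only [mem_ker_sub_one_iff, inv_mem_iff]

theorem range_inv_sub_one (u : GeneralLinearGroup R M) :
    range ((↑u⁻¹ : M →ₗ[R] M) - 1) = range ((u : M →ₗ[R] M) - 1) := by
  have hle : ∀ g : GeneralLinearGroup R M,
      range ((↑g⁻¹ : M →ₗ[R] M) - 1) ≤ range ((g : M →ₗ[R] M) - 1) := fun g =>
    mem_fixingQuotient.1 (inv_mem (mem_fixingQuotient.2 le_rfl))
  exact le_antisymm (hle u) (by simpa using hle u⁻¹)

theorem iInf_ker_sub_one_closure (S : Set (GeneralLinearGroup R M)) :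
    ⨅ u ∈ Subgroup.closure S, ker ((u : M →ₗ[R] M) - 1) = ⨅ s ∈ S, ker ((s : M →ₗ[R] M) - 1) := by
  refine le_antisymm (biInf_mono fun s hs => Subgroup.subset_closure hs) fun v hv => ?_
  simp only [Submodule.mem_iInf, mem_ker_sub_one_iff] at hv ⊢
  exact fun u hu => (Subgroup.closure_le _).2 hv hu

theorem span_sub_closure (S : Set (GeneralLinearGroup R M)) :
    span R {w | ∃ u ∈ Subgroup.closure S, ∃ v : M, w = (u : M →ₗ[R] M) v - v} =
      ⨆ s ∈ S, range ((s : M →ₗ[R] M) - 1) := by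
  apply le_antisymm
  · rw [span_le]
    rintro _ ⟨u, hu, v, rfl⟩
    have hS : S ⊆ fixingQuotient (⨆ s ∈ S, range ((s : M →ₗ[R] M) - 1)) := fun s hs =>
      le_biSup (fun s : GeneralLinearGroup R M => range ((s : M →ₗ[R] M) - 1)) hs
    exact (Subgroup.closure_le _).2 hS hu (mem_range_self _ v)
  · refine iSup₂_le fun s hs => ?_
    rintro _ ⟨v, rfl⟩
    exact subset_span ⟨s, Subgroup.subset_closure hs, v, rfl⟩

end Generators

variable {F V : Type*} [Field F] [AddCommGroup V] [Module F V] [FiniteDimensional F V]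

theorem finrank_ker_sub_one_add_le (a b : GeneralLinearGroup F V) :
    finrank F (ker ((a : V →ₗ[F] V) - 1)) + finrank F (ker ((b : V →ₗ[F] V) - 1)) +
        finrank F (ker ((↑(b⁻¹ * a) : V →ₗ[F] V) - 1)) ≤
      finrank F V + finrank F ↥(ker ((a : V →ₗ[F] V) - 1) ⊓ ker ((b : V →ₗ[F] V) - 1)) +
        finrank F (V ⧸ range ((a : V →ₗ[F] V) - 1) ⊔ range ((b : V →ₗ[F] V) - 1)) := by
  set A := ker ((a : V →ₗ[F] V) - 1)
  set B := ker ((b : V →ₗ[F] V) - 1)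
  set C := ker ((↑(b⁻¹ * a) : V →ₗ[F] V) - 1)
  set T := ((a : V →ₗ[F] V) - 1).coprod ((b : V →ₗ[F] V) - 1)
  set δ : V →ₗ[F] V × V := LinearMap.id.prod (-LinearMap.id)
  have hδ : Function.Injective δ := fun _ _ h => congrArg Prod.fst h
  have hAB : A.prod B ≤ ker T := by
    rintro ⟨p, q⟩ ⟨hp, hq⟩
    simp_all [T, A, B]
  have hC : C.map δ ≤ ker T := by
    rintro _ ⟨c, hc, rfl⟩
    have hac : (a : V →ₗ[F] V) c = (b : V →ₗ[F] V) c := by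
      have hc' := MulAction.mem_stabilizer_iff.1 (mem_ker_sub_one_iff.1 hc)
      rwa [mul_smul, inv_smul_eq_iff] at hc'
    simp [T, δ, hac]
  have hmeet : A.prod B ⊓ C.map δ ≤ (A ⊓ B).map δ := by
    rintro _ ⟨⟨hcA, hcB⟩, c, -, rfl⟩
    exact ⟨c, ⟨hcA, by simpa [δ] using B.neg_mem hcB⟩, rfl⟩
  have hrange : range T = range ((a : V →ₗ[F] V) - 1) ⊔ range ((b : V →ₗ[F] V) - 1) :=
    range_coprod _ _
  have hdim_sup_inf := Submodule.finrank_sup_add_finrank_inf_eq (A.prod B) (C.map δ)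
  have hdim_sup := Submodule.finrank_mono (sup_le hAB hC)
  have hdim_meet := Submodule.finrank_mono hmeet
  have hrank_nullity := finrank_range_add_finrank_ker T
  have hquot := Submodule.finrank_quotient_add_finrank (range T)
  rw [hrange] at hquot hrank_nullity
  rw [Submodule.finrank_prod_eq, ← (equivMapOfInjective δ hδ C).finrank_eq] at hdim_sup_inf
  rw [← (equivMapOfInjective δ hδ (A ⊓ B)).finrank_eq] at hdim_meet
  rw [finrank_prod] at hrank_nullity
  omega

end LinearMap.GeneralLinearGroup

open LinearMap.GeneralLinearGroup in
/-- Scott's Lemma, r = 3, restated: if `G ≤ GL(V)` is generated by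
`x, y, z` with `xyz = 1`, then
`dim C_V(x) + dim C_V(y) + dim C_V(z) ≤ dim V + dim C_V(G) + dim (V/[G,V])`. -/
theorem scott_lemma_three {F V : Type*} [Field F] [AddCommGroup V] [Module F V]
    [FiniteDimensional F V] (x y z : LinearMap.GeneralLinearGroup F V)
    (G : Subgroup (LinearMap.GeneralLinearGroup F V))
    (hgen : G = Subgroup.closure {x, y, z})
    (hprod : x * y * z = 1) :
    Module.finrank F (LinearMap.ker ((x : V →ₗ[F] V) - 1)) +
      Module.finrank F (LinearMap.ker ((y : V →ₗ[F] V) - 1)) +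
      Module.finrank F (LinearMap.ker ((z : V →ₗ[F] V) - 1)) ≤
    Module.finrank F V +
      Module.finrank F ↥(⨅ u ∈ G, LinearMap.ker ((u : V →ₗ[F] V) - 1)) +
      Module.finrank F
        (V ⧸ Submodule.span F {w : V | ∃ u ∈ G, ∃ v : V, w = (u : V →ₗ[F] V) v - v}) := by
  have hz : z = (x * y)⁻¹ := eq_inv_of_mul_eq_one_right hprod
  have hG : G = Subgroup.closure {x, y} := by
    refine hgen.trans (le_antisymm ((Subgroup.closure_le _).2 ?_) (Subgroup.closure_mono ?_))
    · rintro _ (rfl | rfl | rfl)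
      · exact Subgroup.subset_closure (by simp)
      · exact Subgroup.subset_closure (by simp)
      · rw [hz]
        exact inv_mem (mul_mem (Subgroup.subset_closure (by simp))
          (Subgroup.subset_closure (by simp)))
    · exact Set.insert_subset_insert (Set.singleton_subset_iff.2 (by simp))
  rw [hG, iInf_ker_sub_one_closure, span_sub_closure, iInf_pair, iSup_pair]
  have key := finrank_ker_sub_one_add_le x⁻¹ y
  rwa [ker_inv_sub_one, range_inv_sub_one, ← mul_inv_rev, ← hz] at key
end

section
/- Let G be a finite group, M a normal subgroup of G, and g ∈ G. Then the number of M-conjugacy classes contained in the coset gM is at most k(M), the number of conjugacy classes of M. -/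
/-- The equivalence relation of `M`-conjugacy on the coset `gM` (for `M ⊴ G`). -/
def cosetConjSetoid {G : Type*} [Group G] (M : Subgroup G) (g : G) :
    Setoid {x : G // ∃ m ∈ M, x = g * m} where
  r x y := ∃ n ∈ M, (y : G) = n * (x : G) * n⁻¹
  iseqv := by
    refine ⟨fun x => ⟨1, M.one_mem, by simp⟩, ?_, ?_⟩
    · rintro x y ⟨n, hn, h⟩
      exact ⟨n⁻¹, M.inv_mem hn, by rw [h]; group⟩
    · rintro x y z ⟨n, hn, h⟩ ⟨n', hn', h'⟩
      exact ⟨n' * n, M.mul_mem hn' hn, by rw [h', h]; group⟩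

/-- The conjugation action of `M` on the coset `gM`. -/
instance cosetConjAction {G : Type*} [Group G] (M : Subgroup G) [M.Normal] (g : G) :
    MulAction M {x : G // ∃ m ∈ M, x = g * m} where
  smul n x := ⟨(n : G) * (x : G) * (n : G)⁻¹, by
    obtain ⟨m, hm, hx⟩ := x.2
    refine ⟨g⁻¹ * (n : G) * g * m * (n : G)⁻¹, ?_, by rw [hx]; group⟩
    have h1 : g⁻¹ * (n : G) * g ∈ M := by
      simpa using Subgroup.Normal.conj_mem ‹M.Normal› _ n.2 g⁻¹
    exact M.mul_mem (M.mul_mem h1 hm) (M.inv_mem n.2)⟩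
  one_smul x := by ext; show (1:G) * (x:G) * (1:G)⁻¹ = (x:G); group
  mul_smul a b x := by
    ext
    show ((a*b : M) : G) * (x:G) * ((a*b : M) : G)⁻¹
        = (a:G) * ((b:G) * (x:G) * (b:G)⁻¹) * (a:G)⁻¹
    push_cast
    group

theorem cosetConj_smul_coe {G : Type*} [Group G] (M : Subgroup G) [M.Normal] (g : G)
    (n : M) (x : {x : G // ∃ m ∈ M, x = g * m}) :
    ((n • x : {x : G // ∃ m ∈ M, x = g * m}) : G) = (n : G) * (x : G) * (n : G)⁻¹ := rfl

/-- If `M` is a normal subgroup of a finite group `G` and `g ∈ G`, then the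
number of `M`-conjugacy classes contained in the coset `gM` is at most `k(M)`, the number
of conjugacy classes of `M`. -/
theorem card_coset_classes_le {G : Type*} [Group G] [Finite G]
    (M : Subgroup G) [M.Normal] (g : G) :
    Nat.card (Quotient (cosetConjSetoid M g)) ≤ Nat.card (ConjClasses M) := by
  classical
  set X := {x : G // ∃ m ∈ M, x = g * m} with hX
  have hsetoid : cosetConjSetoid M g = MulAction.orbitRel M X := by
    ext x y
    constructor
    · rintro ⟨n, hn, h⟩
      refine ⟨⟨n, hn⟩⁻¹, Subtype.ext ?_⟩
      show ((⟨n, hn⟩⁻¹ : M) : G) * (y : G) * ((⟨n, hn⟩⁻¹ : M) : G)⁻¹ = (x : G)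
      show n⁻¹ * (y : G) * n⁻¹⁻¹ = (x : G)
      rw [h]; group
    · rintro ⟨n, h⟩
      have h2 : n • y = x := h
      have h' : (n : G) * (y : G) * (n : G)⁻¹ = (x : G) := by
        rw [← cosetConj_smul_coe M g n y, h2]
      refine ⟨(n : G)⁻¹, M.inv_mem n.2, ?_⟩
      rw [← h']; group
  rw [hsetoid]
  haveI : Fintype G := Fintype.ofFinite G
  haveI : Fintype X := Fintype.ofFinite X
  haveI : Fintype M := Fintype.ofFinite M
  have hB1 := MulAction.sum_card_fixedBy_eq_card_orbits_mul_card_group M X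
  have hB2 := MulAction.sum_card_fixedBy_eq_card_orbits_mul_card_group (ConjAct M) M
  have hle : ∀ n : M, Fintype.card (MulAction.fixedBy X n)
      ≤ Fintype.card (MulAction.fixedBy M (ConjAct.toConjAct n)) := by
    intro n
    by_cases h : Nonempty (MulAction.fixedBy X n)
    · obtain ⟨⟨x₀, hx₀fix⟩⟩ := h
      have hx₀' : (n : G) * (x₀ : G) * (n : G)⁻¹ = (x₀ : G) := by
        rw [← cosetConj_smul_coe M g n x₀]
        exact congrArg Subtype.val hx₀fix
      have hmem : ∀ x : X, (x₀ : G)⁻¹ * (x : G) ∈ M := by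
        rintro ⟨x, m, hm, hxx⟩
        obtain ⟨m₀, hm₀, hx0⟩ := x₀.2
        show (x₀ : G)⁻¹ * x ∈ M
        rw [hxx, hx0]
        simpa [mul_assoc] using M.mul_mem (M.inv_mem hm₀) hm
      refine Fintype.card_le_of_injective (fun x =>
        ⟨⟨(x₀ : G)⁻¹ * ((x : X) : G), hmem (x : X)⟩, ?_⟩) ?_
      · have hx : (n : G) * ((x : X) : G) * (n : G)⁻¹ = ((x : X) : G) := by
          rw [← cosetConj_smul_coe M g n (x : X)]
          exact congrArg Subtype.val x.2
        show ConjAct.toConjAct n • (⟨(x₀ : G)⁻¹ * ((x : X) : G), hmem (x : X)⟩ : M) = _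
        ext
        show (n : G) * ((x₀ : G)⁻¹ * ((x : X) : G)) * (n : G)⁻¹
            = (x₀ : G)⁻¹ * ((x : X) : G)
        calc (n : G) * ((x₀ : G)⁻¹ * ((x : X) : G)) * (n : G)⁻¹
            = ((n : G) * (x₀ : G) * (n : G)⁻¹)⁻¹
              * ((n : G) * ((x : X) : G) * (n : G)⁻¹) := by group
          _ = (x₀ : G)⁻¹ * ((x : X) : G) := by rw [hx₀', hx]
      · intro a b hab
        have h1 : (x₀ : G)⁻¹ * ((a : X) : G) = (x₀ : G)⁻¹ * ((b : X) : G) :=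
          congrArg (fun z : MulAction.fixedBy M (ConjAct.toConjAct n) => ((z : M) : G)) hab
        have h2 : ((a : X) : G) = ((b : X) : G) := mul_left_cancel h1
        exact Subtype.ext (Subtype.ext h2)
    · simp [Fintype.card_eq_zero_iff.mpr (not_nonempty_iff.mp h)]
  have hsum : (∑ n : M, Fintype.card (MulAction.fixedBy X n))
      ≤ ∑ a : ConjAct M, Fintype.card (MulAction.fixedBy M a) := by
    rw [← Equiv.sum_comp (ConjAct.toConjAct (G := M)).toEquiv
      (fun a => Fintype.card (MulAction.fixedBy M a))]
    exact Finset.sum_le_sum fun n _ => hle n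
  rw [hB1, hB2] at hsum
  have hMpos : 0 < Fintype.card M := Fintype.card_pos
  have hcard : Fintype.card (ConjAct M) = Fintype.card M := rfl
  rw [hcard] at hsum
  have hq : Fintype.card (Quotient (MulAction.orbitRel M X))
      ≤ Fintype.card (Quotient (MulAction.orbitRel (ConjAct M) M)) :=
    Nat.le_of_mul_le_mul_right hsum hMpos
  have hs : MulAction.orbitRel (ConjAct M) M = IsConj.setoid M :=
    Setoid.ext fun a b =>
      iff_of_eq (congrFun (congrFun (ConjAct.orbitRel_conjAct (G := M)) a) b)
  have hconj : Nat.card (ConjClasses M)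
      = Fintype.card (Quotient (MulAction.orbitRel (ConjAct M) M)) := by
    rw [Nat.card_eq_fintype_card]
    exact Fintype.card_congr' (congrArg Quotient hs.symm)
  rw [Nat.card_eq_fintype_card, hconj]
  exact hq
end

section
/- Let G be a finite group acting linearly on a finite dimensional vector space V over a field F, let g ∈ G, let E ⊲ G, and let s ∈ E. Suppose Y = {y ∈ gE : ⟨y, s⟩ = G} satisfies |Y| > |E|/2, that C_V(G) = 0, [G,V] = V, and dim C_V(s) = c. Then (1/|E|) Σ_{y ∈ gE} dim C_V(y) ≤ (1/2) dim V. -/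
open Module LinearMap

section helpers
variable {G F V : Type*} [Group G] [Field F] [AddCommGroup V] [Module F V]
  (ρ : Representation F G V)

private lemma rho_inv_apply (y : G) (v : V) : ρ y (ρ y⁻¹ v) = v := by
  rw [← Module.End.mul_apply, ← map_mul, mul_inv_cancel, map_one, Module.End.one_apply]

/-- the stabilizer of `v` is a subgroup -/
private def fixSub (v : V) : Subgroup G where
  carrier := {x | ρ x v = v}
  one_mem' := by simp
  mul_mem' := by
    intro a b ha hb
    simp only [Set.mem_setOf_eq] at *
    rw [map_mul, Module.End.mul_apply, hb, ha]
  inv_mem' := by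
    intro a ha
    simp only [Set.mem_setOf_eq] at *
    conv_lhs => rw [← ha]
    rw [← Module.End.mul_apply, ← map_mul, inv_mul_cancel, map_one, Module.End.one_apply]

/-- elements `x` with `[V,x] ⊆ W` form a subgroup -/
private def commSub (W : Submodule F V) : Subgroup G where
  carrier := {x | ∀ v, ρ x v - v ∈ W}
  one_mem' := by simp
  mul_mem' := by
    intro a b ha hb v
    have h1 : ρ (a*b) v - v = ρ a (ρ b v - v) + (ρ a v - v) := by
      rw [map_mul, Module.End.mul_apply]; rw [map_sub]; abel
    rw [h1]
    have h2 : ρ a (ρ b v - v) = (ρ a (ρ b v - v) - (ρ b v - v)) + (ρ b v - v) := by abel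
    rw [h2]
    exact W.add_mem (W.add_mem (ha _) (hb v)) (ha v)
  inv_mem' := by
    intro a ha v
    have := ha (ρ a⁻¹ v)
    rw [rho_inv_apply] at this
    have h : ρ a⁻¹ v - v = -(v - ρ a⁻¹ v) := by abel
    rw [h]
    exact W.neg_mem this

/-- If `⟨y,s⟩ = G` and `[G,V] = V` then `[V,y] + [V,s] = V`. -/
private lemma sup_ranges_eq_top (y s : G)
    (hclos : Subgroup.closure {y, s} = ⊤)
    (hcomm : Submodule.span F {w : V | ∃ (x : G) (v : V), w = ρ x v - v} = ⊤) :
    LinearMap.range (ρ y - 1) ⊔ LinearMap.range (ρ s - 1) = ⊤ := by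
  set W := LinearMap.range (ρ y - 1) ⊔ LinearMap.range (ρ s - 1) with hW
  have hsub : Subgroup.closure {y, s} ≤ commSub ρ W := by
    apply Subgroup.closure_le _ |>.mpr
    rintro x (rfl | rfl)
    · intro v
      exact le_sup_left (α := Submodule F V) ⟨v, by simp [LinearMap.sub_apply]⟩
    · intro v
      exact le_sup_right (α := Submodule F V) ⟨v, by simp [LinearMap.sub_apply]⟩
  rw [hclos] at hsub
  rw [← top_le_iff, ← hcomm, Submodule.span_le]
  rintro w ⟨x, v, rfl⟩
  exact hsub (Subgroup.mem_top x) v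
end helpers

section dims
variable {G F V : Type*} [Group G] [Field F] [AddCommGroup V] [Module F V]
  [FiniteDimensional F V] (ρ : Representation F G V)

/-- Generating case (Scott's lemma): `k(y) + k(s) + k(ys) ≤ n`. -/
private lemma gen_case (y s : G) (hclos : Subgroup.closure {y, s} = ⊤)
    (hfix : ∀ v : V, (∀ x : G, ρ x v = v) → v = 0)
    (hcomm : Submodule.span F {w : V | ∃ (x : G) (v : V), w = ρ x v - v} = ⊤) :
    finrank F (LinearMap.ker (ρ y - 1)) + finrank F (LinearMap.ker (ρ s - 1)) +
      finrank F (LinearMap.ker (ρ (y * s) - 1)) ≤ finrank F V := by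
  set A := LinearMap.range (ρ y - 1)
  set B := LinearMap.range (ρ s - 1)
  set f : LinearMap.ker (ρ (y * s) - 1) →ₗ[F] V :=
    (ρ s - 1) ∘ₗ (LinearMap.ker (ρ (y * s) - 1)).subtype with hf
  have hker : ∀ v : V, v ∈ LinearMap.ker (ρ (y * s) - 1) → ρ y (ρ s v) = v := by
    intro v hv
    have : ρ (y * s) v - v = 0 := hv
    have h2 : ρ (y * s) v = v := by rwa [sub_eq_zero] at this
    rwa [map_mul, Module.End.mul_apply] at h2
  have hinj : Function.Injective f := by
    rw [← LinearMap.ker_eq_bot, eq_bot_iff]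
    rintro ⟨v, hv⟩ hfv
    have hsv : ρ s v = v := by
      have : ρ s v - v = 0 := hfv
      rwa [sub_eq_zero] at this
    have hyv : ρ y v = v := by
      have := hker v hv; rwa [hsv] at this
    have : Subgroup.closure {y, s} ≤ fixSub ρ v := by
      apply Subgroup.closure_le _ |>.mpr
      rintro x (rfl | rfl) <;> assumption
    rw [hclos] at this
    have hv0 : v = 0 := hfix v (fun x => this (Subgroup.mem_top x))
    exact Submodule.mem_bot _ |>.mpr (Subtype.ext hv0)
  have hrange : LinearMap.range f ≤ A ⊓ B := by
    rintro w ⟨⟨v, hv⟩, rfl⟩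
    have hfval : f ⟨v, hv⟩ = ρ s v - v := rfl
    constructor
    · have h1 : ρ s v = ρ y⁻¹ v := by
        have := hker v hv
        calc ρ s v = ρ y⁻¹ (ρ y (ρ s v)) := by
              rw [← Module.End.mul_apply, ← map_mul, inv_mul_cancel, map_one, Module.End.one_apply]
          _ = ρ y⁻¹ v := by rw [this]
      refine ⟨-(ρ y⁻¹ v), ?_⟩
      simp only [LinearMap.sub_apply, Module.End.one_apply, map_neg, rho_inv_apply, hfval, h1]
      abel
    · exact ⟨v, rfl⟩
  have h1 : finrank F (LinearMap.ker (ρ (y * s) - 1)) ≤ finrank F ↥(A ⊓ B) := by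
    rw [← LinearMap.finrank_range_of_inj hinj]
    exact Submodule.finrank_mono hrange
  have h2 : finrank F ↥(A ⊔ B) + finrank F ↥(A ⊓ B) = finrank F A + finrank F B :=
    Submodule.finrank_sup_add_finrank_inf_eq A B
  have h3 : A ⊔ B = ⊤ := sup_ranges_eq_top ρ y s hclos hcomm
  rw [h3, finrank_top] at h2
  have h4 : finrank F A + finrank F (LinearMap.ker (ρ y - 1)) = finrank F V :=
    LinearMap.finrank_range_add_finrank_ker _
  have h5 : finrank F B + finrank F (LinearMap.ker (ρ s - 1)) = finrank F V :=
    LinearMap.finrank_range_add_finrank_ker _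
  omega

/-- General case: `k(y) + k(ys) ≤ n + k(s)`. -/
private lemma gen_case' (y s : G) :
    finrank F (LinearMap.ker (ρ y - 1)) + finrank F (LinearMap.ker (ρ (y * s) - 1)) ≤
      finrank F V + finrank F (LinearMap.ker (ρ s - 1)) := by
  set A := LinearMap.ker (ρ y - 1)
  set B := LinearMap.ker (ρ (y * s) - 1)
  have hinf : A ⊓ B ≤ LinearMap.ker (ρ s - 1) := by
    rintro v ⟨ha, hb⟩
    have hyv : ρ y v = v := by
      have : ρ y v - v = 0 := ha; rwa [sub_eq_zero] at this
    have hysv : ρ y (ρ s v) = v := by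
      have : ρ (y * s) v - v = 0 := hb
      have h2 : ρ (y * s) v = v := by rwa [sub_eq_zero] at this
      rwa [map_mul, Module.End.mul_apply] at h2
    have hsv : ρ s v = v := by
      calc ρ s v = ρ y⁻¹ (ρ y (ρ s v)) := by
            rw [← Module.End.mul_apply, ← map_mul, inv_mul_cancel, map_one, Module.End.one_apply]
        _ = ρ y⁻¹ (ρ y v) := by rw [hysv, hyv]
        _ = v := by
            rw [← Module.End.mul_apply, ← map_mul, inv_mul_cancel, map_one, Module.End.one_apply]
    show ρ s v - v = 0
    rw [hsv, sub_self]
  have h2 : finrank F ↥(A ⊔ B) + finrank F ↥(A ⊓ B) = finrank F A + finrank F B :=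
    Submodule.finrank_sup_add_finrank_inf_eq A B
  have h3 : finrank F ↥(A ⊔ B) ≤ finrank F V := Submodule.finrank_le _
  have h4 : finrank F ↥(A ⊓ B) ≤ finrank F (LinearMap.ker (ρ s - 1)) :=
    Submodule.finrank_mono hinf
  omega
end dims

/-- key averaging step: Let a finite group `G` act linearly on `V`, let
`E ⊴ G`, `g ∈ G`, `s ∈ E`. If `Y = {y ∈ gE : ⟨y, s⟩ = G}` has `|Y| > |E|/2`,
`C_V(G) = 0`, `[G,V] = V`, and `dim C_V(s) = c`, then the average over `y ∈ gE` of
`dim C_V(y)` is at most `(1/2) dim V`. -/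
theorem avgdim_le_half_of_many_generating_pairs {G F V : Type*} [Group G] [Fintype G]
    [Field F] [AddCommGroup V] [Module F V] [FiniteDimensional F V]
    (ρ : Representation F G V) (E : Subgroup G) [E.Normal] [Fintype E]
    (g : G) (s : G) (hs : s ∈ E) (c : ℕ)
    (hc : Module.finrank F (LinearMap.ker (ρ s - 1)) = c)
    (hY : 2 * Nat.card {y : G // (∃ e ∈ E, y = g * e) ∧ Subgroup.closure {y, s} = ⊤} >
      Nat.card E)
    -- `C_V(G) = 0`:
    (hfix : ∀ v : V, (∀ x : G, ρ x v = v) → v = 0)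
    -- `[G,V] = V`:
    (hcomm : Submodule.span F {w : V | ∃ (x : G) (v : V), w = ρ x v - v} = ⊤) :
    (∑ e : E, (Module.finrank F (LinearMap.ker (ρ (g * (e : G)) - 1)) : ℝ)) /
        Fintype.card E ≤ (Module.finrank F V : ℝ) / 2 := by
  classical
  set n := finrank F V with hn
  set k : G → ℕ := fun x => finrank F (LinearMap.ker (ρ x - 1)) with hk
  set P : E → Prop := fun e => Subgroup.closure {g * (e : G), s} = ⊤ with hP
  -- translate the counting hypothesis
  have hYE : Fintype.card E < 2 * (Finset.univ.filter P).card := by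
    have hcongr : Nat.card {y : G // (∃ e ∈ E, y = g * e) ∧ Subgroup.closure {y, s} = ⊤}
        = Nat.card {e : E // P e} := by
      apply Nat.card_congr
      refine ⟨fun y => ⟨⟨g⁻¹ * y.1, ?_⟩, ?_⟩, fun e => ⟨g * (e.1 : G), ⟨e.1, e.1.2, rfl⟩, e.2⟩,
        ?_, ?_⟩
      · obtain ⟨⟨e, he, hye⟩, _⟩ := y.2
        simpa [hye] using he
      · have := y.2.2
        simpa [hP] using this
      · intro y; ext; simp
      · intro e; ext; simp
    rw [hcongr] at hY
    rw [Nat.card_eq_fintype_card, Fintype.card_subtype] at hY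
    rw [Nat.card_eq_fintype_card] at hY
    exact hY
  -- pointwise bound for each e
  have hpt : ∀ e : E, k (g * e) + k (g * (e : G) * s) + (if P e then 2 * c else 0) ≤ n + c := by
    intro e
    by_cases hpe : P e
    · have hg := gen_case ρ (g * (e : G)) s hpe hfix hcomm
      rw [hc] at hg
      simp only [if_pos hpe]
      have : k (g * (e : G)) + c + k (g * (e : G) * s) ≤ n := hg
      omega
    · have hg := gen_case' ρ (g * (e : G)) s
      rw [hc] at hg
      simp only [if_neg hpe]
      have : k (g * (e : G)) + k (g * (e : G) * s) ≤ n + c := hg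
      omega
  -- sum the pointwise bounds
  have hsum : (∑ e : E, k (g * e)) + (∑ e : E, k (g * (e : G) * s))
      + (Finset.univ.filter P).card * (2 * c) ≤ Fintype.card E * (n + c) := by
    have h1 := Finset.sum_le_sum (fun e (_ : e ∈ Finset.univ) => hpt e)
    rw [Finset.sum_add_distrib, Finset.sum_add_distrib, Finset.sum_const,
      Finset.card_univ, smul_eq_mul] at h1
    have h2 : (∑ e : E, if P e then 2 * c else 0) = (Finset.univ.filter P).card * (2 * c) := by
      rw [← Finset.sum_filter, Finset.sum_const, smul_eq_mul]
    rw [h2] at h1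
    exact h1
  -- the shift e ↦ e * s is a bijection of E
  have hswap : (∑ e : E, k (g * (e : G) * s)) = ∑ e : E, k (g * e) := by
    apply Fintype.sum_equiv (Equiv.mulRight (⟨s, hs⟩ : E))
    intro e
    simp [mul_assoc]
  rw [hswap] at hsum
  -- conclude 2 * S ≤ |E| * n
  set S := ∑ e : E, k (g * e) with hS
  have hEc : Fintype.card E * c ≤ 2 * (Finset.univ.filter P).card * c :=
    Nat.mul_le_mul_right c (le_of_lt hYE)
  have hmain : 2 * S ≤ Fintype.card E * n := by
    rw [Nat.mul_add] at hsum
    nlinarith [hsum, hEc]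
  -- cast to the reals
  have hE0 : 0 < (Fintype.card E : ℝ) := by
    have : 0 < Fintype.card E := Fintype.card_pos
    exact_mod_cast this
  rw [div_le_div_iff₀ hE0 (by norm_num : (0:ℝ) < 2)]
  have hcast : (∑ e : E, (finrank F (LinearMap.ker (ρ (g * (e : G)) - 1)) : ℝ)) = (S : ℝ) := by
    rw [hS]
    push_cast
    rfl
  rw [hcast]
  have : ((2 * S : ℕ) : ℝ) ≤ ((Fintype.card E * n : ℕ) : ℝ) := by exact_mod_cast hmain
  push_cast at this
  linarith
end
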